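/- If γ₁ ⊕ γ₂ is closed, x ∈ nodes (γ₁ ⊕ γ₂), and nodes γ₁ = reach (γ₁ ⊕ γ₂) x, then γ₁ is closed, x ∈ nodes γ₁, and nodes γ₁ = reach γ₁ x. -/

import Mathlib

open scoped Classical

/-- A partial graph of type `T`: a finite partial map from nodes (natural
numbers, undefined on `0 = null`) to pairs of a value and an adjacency list. -/
structure PGraph (T : Type) where
  f : ℕ → Option (T × List ℕ)
  dom : Finset ℕ
  mem_dom : ∀ x, x ∈ dom ↔ (f x).isSome
  null_not_mem : f 0 = none

namespace PGraph

variable {T T' : Type}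

def empty : PGraph T :=
  ⟨fun _ => none, ∅, by intro x; simp, rfl⟩

/-- Total (left-biased) union; meaningful when domains are disjoint. -/
def union (γ₁ γ₂ : PGraph T) : PGraph T where
  f := fun x => match γ₁.f x with
    | some v => some v
    | none => γ₂.f x
  dom := γ₁.dom ∪ γ₂.dom
  mem_dom := by
    intro x
    rw [Finset.mem_union, γ₁.mem_dom, γ₂.mem_dom]
    cases h : γ₁.f x <;> simp [h]
  null_not_mem := by simp [γ₁.null_not_mem, γ₂.null_not_mem]

/-- The partial PCM join: defined iff the domains are disjoint. -/
noncomputable def join (γ₁ γ₂ : PGraph T) : Option (PGraph T) :=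
  if Disjoint γ₁.dom γ₂.dom then some (union γ₁ γ₂) else none

/-- Filter (restriction) of a graph to a set of nodes. -/
noncomputable def restrict (γ : PGraph T) (S : Set ℕ) : PGraph T where
  f := fun x => if x ∈ S then γ.f x else none
  dom := γ.dom.filter (fun x => x ∈ S)
  mem_dom := by
    intro x
    rw [Finset.mem_filter, γ.mem_dom]
    by_cases h : x ∈ S <;> simp [h]
  null_not_mem := by simp [γ.null_not_mem]

/-- Map combinator: apply `g` pointwise at each node. -/
def mapNode (g : ℕ → T × List ℕ → T' × List ℕ) (γ : PGraph T) : PGraph T' where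
  f := fun x => (γ.f x).map (g x)
  dom := γ.dom
  mem_dom := by intro x; rw [γ.mem_dom]; cases h : γ.f x <;> simp [h]
  null_not_mem := by simp [γ.null_not_mem]

/-- Erasure: replace every value with the unit value, keeping adjacency. -/
def erasure (γ : PGraph T) : PGraph Unit :=
  mapNode (fun _ p => ((), p.2)) γ

/-- Adjacency list of a node. -/
def adj (γ : PGraph T) (x : ℕ) : List ℕ :=
  ((γ.f x).map Prod.snd).getD []

/-- The value stored at a node, if any. -/
def val? (γ : PGraph T) (x : ℕ) : Option T :=
  (γ.f x).map Prod.fst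

/-- Sinks: nodes appearing in some adjacency list. -/
def sinks (γ : PGraph T) : Set ℕ :=
  ⋃ x ∈ γ.dom, {y | y ∈ γ.adj x}

/-- A graph is closed if it has no dangling edges. -/
def Closed (γ : PGraph T) : Prop :=
  sinks γ ⊆ insert 0 (↑γ.dom : Set ℕ)

/-- Remove a node (and its outgoing edges) from the graph. -/
def erase (γ : PGraph T) (y : ℕ) : PGraph T where
  f := fun x => if x = y then none else γ.f x
  dom := γ.dom.erase y
  mem_dom := by
    intro x
    rw [Finset.mem_erase, γ.mem_dom]
    by_cases h : x = y <;> simp [h]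
  null_not_mem := by
    by_cases h : (0 : ℕ) = y <;> simp [h, γ.null_not_mem]

/-- Set of nodes reachable from `x` in `γ`. -/
def reach (γ : PGraph T) (x : ℕ) : Set ℕ :=
  if h : x ∈ γ.dom then
    {x} ∪ ⋃ y ∈ γ.adj x, reach (γ.erase x) y
  else ∅
termination_by γ.dom.card
decreasing_by simpa [PGraph.erase] using Finset.card_erase_lt_of_mem h

/-- Summits of a path starting at `x`. -/
def summit (γ : PGraph T) (x : ℕ) : Set ℕ :=
  if h : x ∈ γ.dom then ⋃ y ∈ γ.adj x, summit (γ.erase x) y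
  else {x}
termination_by γ.dom.card
decreasing_by simpa [PGraph.erase] using Finset.card_erase_lt_of_mem h

/-- All summits of a graph. -/
def summits (γ : PGraph T) : Set ℕ :=
  ⋃ x ∈ γ.dom, summit γ x

/-- Nodes that lie on a cycle (reachable from one of their own children). -/
def cycles (γ : PGraph T) : Set ℕ :=
  {x | x ∈ ⋃ y ∈ γ.adj x, reach γ y}

/-- Targets of dangling edges. -/
def dangls (γ : PGraph T) : Set ℕ :=
  sinks γ \ ↑γ.dom

/-- Nodes forming cycles of size one. -/
def loops (γ : PGraph T) : Set ℕ :=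
  {x | x ∈ γ.dom ∧ x ∈ γ.adj x}

/-- Filter by contents: keep nodes whose value lies in `V`. -/
noncomputable def filterVal (γ : PGraph T) (V : Set T) : PGraph T :=
  γ.restrict {x | ∃ v ∈ V, γ.val? x = some v}

/-- Update the entry at node `x` (if present). -/
def update (γ : PGraph T) (x : ℕ) (p : T × List ℕ) : PGraph T where
  f := fun y => if y = x then (γ.f y).map (fun _ => p) else γ.f y
  dom := γ.dom
  mem_dom := by
    intro y
    rw [γ.mem_dom]
    by_cases h : y = x
    · subst h; cases hf : γ.f y <;> simp [hf]
    · simp [h]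
  null_not_mem := by
    by_cases h : (0 : ℕ) = x
    · subst h; simp [γ.null_not_mem]
    · simp [h, γ.null_not_mem]

/-- Binary graphs: every adjacency list has exactly two elements. -/
def Binary (γ : PGraph T) : Prop :=
  ∀ x p, γ.f x = some p → p.2.length = 2

/-- Marks of the Schorr-Waite algorithm. -/
inductive Mark | O | L | R | X
deriving DecidableEq

/-- The `if-mark` transformation on a node's mark and children. -/
def ifMark (f : ℕ → ℕ) (x : ℕ) : Mark × List ℕ → Unit × List ℕ
  | (Mark.L, [_, r]) => ((), [f x, r])
  | (Mark.R, [l, _]) => ((), [l, f x])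
  | (_, l) => ((), l)

end PGraph

/-! The nodes of `γ₁` are the nodes reachable from `x` in `γ₁ ⊕ γ₂`, and the two graphs agree
there; reachability from `x` only inspects those nodes, so it is the same in `γ₁`. Closedness of
`γ₁` follows because a reachable set is closed under edges into the graph. -/

namespace PGraph

variable {T : Type}

theorem mem_erase_dom {γ : PGraph T} {x z : ℕ} : z ∈ (γ.erase x).dom ↔ z ≠ x ∧ z ∈ γ.dom :=
  Finset.mem_erase

theorem erase_f_of_ne {γ : PGraph T} {x z : ℕ} (h : z ≠ x) : (γ.erase x).f z = γ.f z :=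
  if_neg h

theorem adj_erase_of_ne {γ : PGraph T} {x z : ℕ} (h : z ≠ x) : (γ.erase x).adj z = γ.adj z := by
  simp only [adj, erase_f_of_ne h]

theorem reach_of_mem {γ : PGraph T} {x : ℕ} (hx : x ∈ γ.dom) :
    γ.reach x = {x} ∪ ⋃ y ∈ γ.adj x, (γ.erase x).reach y := by
  rw [reach, dif_pos hx]

theorem reach_of_not_mem {γ : PGraph T} {x : ℕ} (hx : x ∉ γ.dom) : γ.reach x = ∅ := by
  rw [reach, dif_neg hx]

theorem mem_reach_self {γ : PGraph T} {x : ℕ} (hx : x ∈ γ.dom) : x ∈ γ.reach x := by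
  rw [reach_of_mem hx]
  exact Or.inl rfl

theorem reach_subset_dom (γ : PGraph T) (x : ℕ) : γ.reach x ⊆ γ.dom := by
  induction γ, x using reach.induct with
  | case1 γ x hx ih =>
    rw [reach_of_mem hx]
    rintro z (rfl | hz)
    · exact hx
    · obtain ⟨y, -, hz⟩ := Set.mem_iUnion₂.1 hz
      exact (mem_erase_dom.1 (ih y hz)).2
  | case2 γ x hx => simp [reach_of_not_mem hx]

theorem mem_reach_of_mem_adj {γ : PGraph T} {x z y : ℕ} (hz : z ∈ γ.reach x)
    (hzy : y ∈ γ.adj z) (hy : y ∈ γ.dom) : y ∈ γ.reach x := by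
  induction γ, x using reach.induct generalizing z with
  | case1 γ x hx ih =>
    rw [reach_of_mem hx] at hz ⊢
    by_cases hyx : y = x
    · exact Or.inl hyx
    have hy' : y ∈ (γ.erase x).dom := mem_erase_dom.2 ⟨hyx, hy⟩
    right
    rcases hz with rfl | hz
    · exact Set.mem_biUnion hzy (mem_reach_self hy')
    · obtain ⟨w, hw, hz⟩ := Set.mem_iUnion₂.1 hz
      have hzx : z ≠ x := (mem_erase_dom.1 (reach_subset_dom _ _ hz)).1
      rw [← adj_erase_of_ne hzx] at hzy
      exact Set.mem_biUnion hw (ih w hz hzy hy')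
  | case2 γ x hx => simp [reach_of_not_mem hx] at hz

theorem reach_subset_reach_of_eqOn {γ γ' : PGraph T} {x : ℕ}
    (h : Set.EqOn γ.f γ'.f (γ.reach x)) : γ.reach x ⊆ γ'.reach x := by
  induction γ, x using reach.induct generalizing γ' with
  | case1 γ x hx ih =>
    have hfx : γ.f x = γ'.f x := h (mem_reach_self hx)
    have hx' : x ∈ γ'.dom := by
      rw [γ'.mem_dom, ← hfx, ← γ.mem_dom]
      exact hx
    have hadj : γ.adj x = γ'.adj x := by simp only [adj, hfx]
    rw [reach_of_mem hx, reach_of_mem hx', hadj]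
    refine Set.union_subset_union_right _ (Set.biUnion_mono subset_rfl fun y hy => ?_)
    refine ih y fun z hz => ?_
    have hzx : z ≠ x := (mem_erase_dom.1 (reach_subset_dom _ _ hz)).1
    rw [erase_f_of_ne hzx, erase_f_of_ne hzx]
    rw [reach_of_mem hx] at h
    exact h (Or.inr (Set.mem_biUnion (hadj ▸ hy) hz))
  | case2 γ x hx => simp [reach_of_not_mem hx]

theorem union_f_of_mem_left {γ₁ γ₂ : PGraph T} {z : ℕ} (hz : z ∈ γ₁.dom) :
    (union γ₁ γ₂).f z = γ₁.f z := by
  obtain ⟨v, hv⟩ := Option.isSome_iff_exists.1 ((γ₁.mem_dom z).1 hz)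
  simp [union, hv]

end PGraph

open PGraph in
theorem closed_reachable_component_general (T : Type) (γ₁ γ₂ : PGraph T) (x : ℕ)
    (hc : (PGraph.union γ₁ γ₂).Closed)
    (hx : x ∈ (PGraph.union γ₁ γ₂).dom)
    (hn : (↑γ₁.dom : Set ℕ) = (PGraph.union γ₁ γ₂).reach x) :
    γ₁.Closed ∧ x ∈ γ₁.dom ∧ (↑γ₁.dom : Set ℕ) = γ₁.reach x := by
  set γ := union γ₁ γ₂
  have hagree : Set.EqOn γ.f γ₁.f (γ.reach x) := fun z hz =>
    union_f_of_mem_left (by rw [← hn] at hz; exact hz)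
  have hadj : ∀ z ∈ γ₁.dom, γ₁.adj z = γ.adj z := fun z hz => by
    simp only [adj, γ, union_f_of_mem_left hz]
  refine ⟨?closed, by simpa [← hn] using mem_reach_self hx, ?reach⟩
  case reach =>
    exact (reach_subset_dom γ₁ x).antisymm' (hn ▸ reach_subset_reach_of_eqOn hagree)
  case closed =>
    intro y hy
    obtain ⟨z, hz, hzy⟩ := Set.mem_iUnion₂.1 hy
    rw [Set.mem_ofPred_eq, hadj z hz] at hzy
    have hz' : z ∈ γ.dom := Finset.mem_union_left _ hz
    rcases hc (Set.mem_biUnion hz' hzy) with h0 | hy'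
    · exact Or.inl h0
    · have hzr : z ∈ γ.reach x := hn ▸ hz
      exact Or.inr (hn ▸ mem_reach_of_mem_adj hzr hzy hy')

/-- If `γ₁ ⊕ γ₂` is closed, `x` is a node of it, and `γ₁` is exactly the
subgraph reachable from `x`, then `γ₁` is closed, contains `x`, and its nodes
are those reachable from `x` within `γ₁`. -/
theorem closed_reachable_component (T : Type) (γ₁ γ₂ : PGraph T) (x : ℕ)
    (hd : Disjoint γ₁.dom γ₂.dom)
    (hc : (PGraph.union γ₁ γ₂).Closed)
    (hx : x ∈ (PGraph.union γ₁ γ₂).dom)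
    (hn : (↑γ₁.dom : Set ℕ) = (PGraph.union γ₁ γ₂).reach x) :
    γ₁.Closed ∧ x ∈ γ₁.dom ∧ (↑γ₁.dom : Set ℕ) = γ₁.reach x :=
  closed_reachable_component_general T γ₁ γ₂ x hc hx hn
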